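/- arXiv:2506.19281 — 2 statements merged into one kernel-verified Lean document; each statement's English description precedes it below -/
import Mathlib

section
/- Let E and F be real inner product spaces, T ≥ 1, and R : E × F → ℝ differentiable in each variable, convex in the first variable for each fixed second argument, concave in the second variable for each fixed first argument. Let G_θ, G_q ≥ 0 bound the gradients: ‖∇_θ R(θ_t, q_t)‖ ≤ G_θ and ‖∇_q R(θ_t, q_t)‖ ≤ G_q along the iterates. Run gradient descent-ascent with step size η = 1/√T: θ_{t+1} = θ_t − η·∇_θ R(θ_t, q_t), q_{t+1} = q_t + η·∇_q R(θ_t, q_t). Then for the averaged iterates θ̄ = (1/T)∑_t θ_t, q̄ = (1/T)∑_t q_t and for all θ ∈ E, q ∈ F: R(θ̄, q) − R(θ, q̄) ≤ (‖θ_1 − θ‖² + ‖q_1 − q‖² + G_θ² + G_q²)/(2√T). -/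
/-!
Convexity in `θ` and concavity in `q` bound the gap `R θₜ q - R θ qₜ` of each iterate by the
linearisation `⟪∇_θ R, θₜ - θ⟫ + ⟪∇_q R, q - qₜ⟫`. Expanding `‖θₜ₊₁ - θ‖²` shows that each of these
inner products is the decrease of `‖θₜ - θ‖² / (2η)` plus `η ‖∇R‖² / 2`, so their sum over `t`
telescopes to at most `‖θ₁ - θ‖² / (2η) + η T G² / 2`. Jensen's inequality transfers the averaged
bound to the averaged iterates, and `η = 1 / √T` balances the two terms.
-/

open Finset AffineMap

section Gradient

variable {E : Type*} [NormedAddCommGroup E] [InnerProductSpace ℝ E] [CompleteSpace E]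
  {f : E → ℝ} {g x y : E} {s : Set E}

theorem HasGradientAt.hasDerivAt_comp_lineMap (hf : HasGradientAt f g x) (y : E) :
    HasDerivAt (fun t : ℝ => f (lineMap x y t)) (inner ℝ g (y - x)) 0 :=
  hf.hasFDerivAt.comp_hasDerivAt_of_eq (0 : ℝ) hasDerivAt_lineMap (by simp)

theorem ConvexOn.inner_gradient_le_sub (hf : ConvexOn ℝ s f) (hx : x ∈ s) (hy : y ∈ s)
    (hg : HasGradientAt f g x) : inner ℝ g (y - x) ≤ f y - f x := by
  have hline := (hf.comp_affineMap (lineMap x y)).le_slope_of_hasDerivAt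
    (x := 0) (y := 1) (by simpa) (by simpa) one_pos (hg.hasDerivAt_comp_lineMap y)
  simpa [slope_def_field] using hline

theorem ConcaveOn.sub_le_inner_gradient (hf : ConcaveOn ℝ s f) (hx : x ∈ s) (hy : y ∈ s)
    (hg : HasGradientAt f g x) : f y - f x ≤ inner ℝ g (y - x) := by
  have hline := (hf.neg.comp_affineMap (lineMap x y)).le_slope_of_hasDerivAt
    (x := 0) (y := 1) (by simpa) (by simpa) one_pos (hg.hasDerivAt_comp_lineMap y).neg
  simpa [slope_def_field, add_comm] using hline

end Gradient

section GradientDescent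

variable {E : Type*} [NormedAddCommGroup E] [InnerProductSpace ℝ E]

theorem norm_sub_smul_sub_sq (x g y : E) (η : ℝ) :
    ‖x - η • g - y‖ ^ 2 = ‖x - y‖ ^ 2 - 2 * η * inner ℝ g (x - y) + η ^ 2 * ‖g‖ ^ 2 := by
  rw [sub_right_comm, norm_sub_sq_real, real_inner_smul_right, norm_smul, real_inner_comm,
    Real.norm_eq_abs, mul_pow, sq_abs]
  ring

variable {x g : ℕ → E} {η : ℝ} {m n : ℕ}

theorem sum_inner_sub_le_of_gradient_descent (hη : 0 < η)
    (hstep : ∀ t ∈ Ico m n, x (t + 1) = x t - η • g t) (y : E) (hmn : m ≤ n) :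
    ∑ t ∈ Ico m n, inner ℝ (g t) (x t - y) ≤
      ‖x m - y‖ ^ 2 / (2 * η) + η / 2 * ∑ t ∈ Ico m n, ‖g t‖ ^ 2 := by
  have hdiff : ∀ t ∈ Ico m n, ‖x (t + 1) - y‖ ^ 2 - ‖x t - y‖ ^ 2 =
      η ^ 2 * ‖g t‖ ^ 2 - 2 * η * inner ℝ (g t) (x t - y) := fun t ht => by
    rw [hstep t ht, norm_sub_smul_sub_sq]
    ring
  have htelescope := sum_Ico_sub (fun t => ‖x t - y‖ ^ 2) hmn
  rw [sum_congr rfl hdiff, sum_sub_distrib, ← mul_sum, ← mul_sum] at htelescope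
  rw [div_add' _ _ _ (by positivity), le_div_iff₀ (by positivity)]
  nlinarith [sq_nonneg ‖x n - y‖]

theorem sum_inner_sub_le_of_gradient_ascent (hη : 0 < η)
    (hstep : ∀ t ∈ Ico m n, x (t + 1) = x t + η • g t) (y : E) (hmn : m ≤ n) :
    ∑ t ∈ Ico m n, inner ℝ (g t) (y - x t) ≤
      ‖x m - y‖ ^ 2 / (2 * η) + η / 2 * ∑ t ∈ Ico m n, ‖g t‖ ^ 2 := by
  have h := sum_inner_sub_le_of_gradient_descent (x := x) (g := fun t => -g t) hη
    (fun t ht => by rw [hstep t ht, smul_neg, sub_neg_eq_add]) y hmn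
  simpa only [inner_neg_left, ← inner_neg_right, neg_sub, norm_neg] using h

end GradientDescent

section ConvexConcave

variable {E F : Type*} [NormedAddCommGroup E] [InnerProductSpace ℝ E]
  [NormedAddCommGroup F] [InnerProductSpace ℝ F] {R : E → F → ℝ} {θ θ' : E} {q q' : F}

theorem sub_le_inner_add_inner_of_convex_concave [CompleteSpace E] [CompleteSpace F]
    {a : E} {b : F} (hconv : ConvexOn ℝ Set.univ (R · q')) (hconc : ConcaveOn ℝ Set.univ (R θ'))
    (ha : HasGradientAt (R · q') a θ') (hb : HasGradientAt (R θ') b q') (θ : E) (q : F) :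
    R θ' q - R θ q' ≤ inner ℝ a (θ' - θ) + inner ℝ b (q - q') := by
  have hθ := hconv.inner_gradient_le_sub (Set.mem_univ θ') (Set.mem_univ θ) ha
  have hq := hconc.sub_le_inner_gradient (Set.mem_univ q') (Set.mem_univ q) hb
  rw [← neg_sub θ' θ, inner_neg_right] at hθ
  linarith

theorem sub_le_sum_mul_sub_of_convex_concave {ι : Type*} {s : Finset ι} {w : ι → ℝ}
    (hw₀ : ∀ i ∈ s, 0 ≤ w i) (hw₁ : ∑ i ∈ s, w i = 1)
    (hconv : ConvexOn ℝ Set.univ (R · q)) (hconc : ConcaveOn ℝ Set.univ (R θ))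
    (θs : ι → E) (qs : ι → F) :
    R (∑ i ∈ s, w i • θs i) q - R θ (∑ i ∈ s, w i • qs i) ≤
      ∑ i ∈ s, w i * (R (θs i) q - R θ (qs i)) := by
  have hθ := hconv.map_sum_le hw₀ hw₁ fun i _ => Set.mem_univ (θs i)
  have hq := hconc.le_map_sum hw₀ hw₁ fun i _ => Set.mem_univ (qs i)
  simp only [smul_eq_mul] at hθ hq
  simp only [mul_sub, sum_sub_distrib]
  linarith

end ConvexConcave

theorem gda_duality_gap_general {E F : Type*} [NormedAddCommGroup E] [InnerProductSpace ℝ E]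
    [CompleteSpace E] [NormedAddCommGroup F] [InnerProductSpace ℝ F] [CompleteSpace F]
    (T : ℕ) (hT : 1 ≤ T)
    (R : E → F → ℝ) (gθ : E → F → E) (gq : E → F → F)
    (hconv : ∀ q : F, ConvexOn ℝ Set.univ (fun θ => R θ q))
    (hconc : ∀ θ : E, ConcaveOn ℝ Set.univ (fun q => R θ q))
    (hdiffθ : ∀ (θ : E) (q : F), HasGradientAt (fun θ' => R θ' q) (gθ θ q) θ)
    (hdiffq : ∀ (θ : E) (q : F), HasGradientAt (fun q' => R θ q') (gq θ q) q)
    (Gθ Gq : ℝ)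
    (η : ℝ) (hη : η = 1 / Real.sqrt T)
    (θseq : ℕ → E) (qseq : ℕ → F)
    (hstepθ : ∀ t, θseq (t + 1) = θseq t - η • gθ (θseq t) (qseq t))
    (hstepq : ∀ t, qseq (t + 1) = qseq t + η • gq (θseq t) (qseq t))
    (hbndθ : ∀ t ∈ Finset.Icc 1 T, ‖gθ (θseq t) (qseq t)‖ ≤ Gθ)
    (hbndq : ∀ t ∈ Finset.Icc 1 T, ‖gq (θseq t) (qseq t)‖ ≤ Gq)
    (θbar : E) (qbar : F)
    (hθbar : θbar = (T : ℝ)⁻¹ • ∑ t ∈ Finset.Icc 1 T, θseq t)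
    (hqbar : qbar = (T : ℝ)⁻¹ • ∑ t ∈ Finset.Icc 1 T, qseq t) :
    ∀ (θ : E) (q : F),
      R θbar q - R θ qbar ≤
        (‖θseq 1 - θ‖ ^ 2 + ‖qseq 1 - q‖ ^ 2 + Gθ ^ 2 + Gq ^ 2) /
          (2 * Real.sqrt T) := by
  intro θ q
  rw [← Ico_add_one_right_eq_Icc] at hbndθ hbndq hθbar hqbar
  have hT₀ : (0 : ℝ) < T := by exact_mod_cast hT
  have hη₀ : 0 < η := by rw [hη]; positivity
  have hweights : ∑ _t ∈ Ico 1 (T + 1), (T : ℝ)⁻¹ = 1 := by simp [hT₀.ne']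
  have hgap : R θbar q - R θ qbar ≤
      (T : ℝ)⁻¹ * ∑ t ∈ Ico 1 (T + 1), (R (θseq t) q - R θ (qseq t)) := by
    rw [hθbar, hqbar, smul_sum, smul_sum, mul_sum]
    exact sub_le_sum_mul_sub_of_convex_concave (fun _ _ => by positivity) hweights
      (hconv q) (hconc θ) θseq qseq
  have hregret : ∑ t ∈ Ico 1 (T + 1), (R (θseq t) q - R θ (qseq t)) ≤
      (‖θseq 1 - θ‖ ^ 2 + ‖qseq 1 - q‖ ^ 2) / (2 * η) + η / 2 * (T * Gθ ^ 2 + T * Gq ^ 2) := by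
    have hstep := sum_le_sum fun t (_ : t ∈ Ico 1 (T + 1)) =>
      sub_le_inner_add_inner_of_convex_concave (hconv (qseq t)) (hconc (θseq t))
        (hdiffθ (θseq t) (qseq t)) (hdiffq (θseq t) (qseq t)) θ q
    have hθ := sum_inner_sub_le_of_gradient_descent hη₀ (fun t _ => hstepθ t) θ
      (Nat.le_add_left 1 T)
    have hq := sum_inner_sub_le_of_gradient_ascent hη₀ (fun t _ => hstepq t) q
      (Nat.le_add_left 1 T)
    have hGθ := sum_le_card_nsmul _ _ _ fun t ht =>
      pow_le_pow_left₀ (norm_nonneg _) (hbndθ t ht) 2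
    have hGq := sum_le_card_nsmul _ _ _ fun t ht =>
      pow_le_pow_left₀ (norm_nonneg _) (hbndq t ht) 2
    simp only [Nat.card_Ico, add_tsub_cancel_right, nsmul_eq_mul] at hGθ hGq
    have := mul_le_mul_of_nonneg_left (add_le_add hGθ hGq) (by positivity : 0 ≤ η / 2)
    rw [sum_add_distrib] at hstep
    rw [add_div]
    linarith
  calc R θbar q - R θ qbar
      ≤ (T : ℝ)⁻¹ * ((‖θseq 1 - θ‖ ^ 2 + ‖qseq 1 - q‖ ^ 2) / (2 * η) +
          η / 2 * (T * Gθ ^ 2 + T * Gq ^ 2)) :=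
        hgap.trans (mul_le_mul_of_nonneg_left hregret (by positivity))
    _ = (‖θseq 1 - θ‖ ^ 2 + ‖qseq 1 - q‖ ^ 2 + Gθ ^ 2 + Gq ^ 2) / (2 * Real.sqrt T) := by
        rw [hη]
        field_simp
        rw [Real.sq_sqrt hT₀.le]
        ring

/-- **Duality-gap bound for gradient descent-ascent (deterministic Theorem 1).**
For a convex-concave differentiable `R : E → F → ℝ` with gradients bounded by
`Gθ` and `Gq` along the iterates, gradient descent-ascent with step size
`η = 1/√T` yields averaged iterates `θ̄, q̄` with
`R(θ̄, q) - R(θ, q̄) ≤ (‖θ_1 - θ‖² + ‖q_1 - q‖² + Gθ² + Gq²)/(2√T)` for all `θ, q`. -/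
theorem gda_duality_gap {E F : Type*} [NormedAddCommGroup E] [InnerProductSpace ℝ E]
    [CompleteSpace E] [NormedAddCommGroup F] [InnerProductSpace ℝ F] [CompleteSpace F]
    (T : ℕ) (hT : 1 ≤ T)
    (R : E → F → ℝ) (gθ : E → F → E) (gq : E → F → F)
    (hconv : ∀ q : F, ConvexOn ℝ Set.univ (fun θ => R θ q))
    (hconc : ∀ θ : E, ConcaveOn ℝ Set.univ (fun q => R θ q))
    (hdiffθ : ∀ (θ : E) (q : F), HasGradientAt (fun θ' => R θ' q) (gθ θ q) θ)
    (hdiffq : ∀ (θ : E) (q : F), HasGradientAt (fun q' => R θ q') (gq θ q) q)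
    (Gθ Gq : ℝ) (hGθ : 0 ≤ Gθ) (hGq : 0 ≤ Gq)
    (η : ℝ) (hη : η = 1 / Real.sqrt T)
    (θseq : ℕ → E) (qseq : ℕ → F)
    (hstepθ : ∀ t, θseq (t + 1) = θseq t - η • gθ (θseq t) (qseq t))
    (hstepq : ∀ t, qseq (t + 1) = qseq t + η • gq (θseq t) (qseq t))
    (hbndθ : ∀ t ∈ Finset.Icc 1 T, ‖gθ (θseq t) (qseq t)‖ ≤ Gθ)
    (hbndq : ∀ t ∈ Finset.Icc 1 T, ‖gq (θseq t) (qseq t)‖ ≤ Gq)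
    (θbar : E) (qbar : F)
    (hθbar : θbar = (T : ℝ)⁻¹ • ∑ t ∈ Finset.Icc 1 T, θseq t)
    (hqbar : qbar = (T : ℝ)⁻¹ • ∑ t ∈ Finset.Icc 1 T, qseq t) :
    ∀ (θ : E) (q : F),
      R θbar q - R θ qbar ≤
        (‖θseq 1 - θ‖ ^ 2 + ‖qseq 1 - q‖ ^ 2 + Gθ ^ 2 + Gq ^ 2) /
          (2 * Real.sqrt T) :=
  gda_duality_gap_general T hT R gθ gq hconv hconc hdiffθ hdiffq Gθ Gq η hη θseq qseq hstepθ hstepq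
    hbndθ hbndq θbar qbar hθbar hqbar
end

section
/- Let E be a real normed space, C ≥ 1 a number of classes, C_L ≥ 0, Γ ≥ 0, γ ∈ ℝ, and s ≥ 1 a natural number. Let h : E → (Fin C → ℝ) satisfy |h(x)(c) − h(x')(c)| ≤ C_L·‖x − x'‖ for all x, x', c. Let T_set and S_set be nonempty finite sets of labeled points in E × Fin C (training and test embeddings). Suppose there is a map φ : S_set → T_set such that for every (x', y') ∈ S_set, φ(x', y') = (x, y) has the same label y = y' and ‖x − x'‖ ≤ Γ, and every fiber of φ has at most s elements. Then |S_set|·L^{te}_{γ − 2 C_L Γ}(h) ≤ s·|T_set|·L^{tr}_{γ}(h), where L^{te}_{γ'}(h) = (1/|S_set|)·#{(x', y') ∈ S_set : h(x')(y') ≤ γ' + max_{c ≠ y'} h(x')(c)} and L^{tr}_{γ}(h) = (1/|T_set|)·#{(x, y) ∈ T_set : h(x)(y) ≤ γ + max_{c ≠ y} h(x)(c)}. -/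
open scoped Classical

/-- The margin loss of classifier `h` at margin threshold `γ` over the finite
labeled set `S`: the fraction of points `(g, y) ∈ S` whose score for the true
label `y` does not beat every other class score by more than `γ`. -/
noncomputable def marginLoss {E : Type*} {C : ℕ} (h : E → Fin C → ℝ) (γ : ℝ)
    (S : Finset (E × Fin C)) : ℝ :=
  (S.filter fun p => ∃ c : Fin C, c ≠ p.2 ∧ h p.1 p.2 ≤ γ + h p.1 c).card / S.card

/-- **Coverage-based comparison of test and training margin losses.** If every
test point `(x', y')` in `S_set` is matched by `φ` to a training point
`(x, y) ∈ T_set` with the same label and `‖x - x'‖ ≤ Γ`, each training point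
being matched by at most `s` test points, and `h` is coordinatewise
`C_L`-Lipschitz, then
`|S_set| · L^{te}_{γ - 2 C_L Γ}(h) ≤ s · |T_set| · L^{tr}_γ(h)`. -/
theorem test_margin_loss_le_train {E : Type*} [NormedAddCommGroup E]
    (C : ℕ) (hC : 1 ≤ C) (C_L : ℝ) (hCL : 0 ≤ C_L) (Γ : ℝ) (hΓ : 0 ≤ Γ)
    (γ : ℝ) (s : ℕ) (hs : 1 ≤ s)
    (h : E → Fin C → ℝ)
    (hlip : ∀ (x x' : E) (c : Fin C), |h x c - h x' c| ≤ C_L * ‖x - x'‖)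
    (T_set S_set : Finset (E × Fin C)) (hT : T_set.Nonempty) (hS : S_set.Nonempty)
    (φ : E × Fin C → E × Fin C)
    (hφmem : ∀ p ∈ S_set, φ p ∈ T_set)
    (hφlabel : ∀ p ∈ S_set, (φ p).2 = p.2)
    (hφdist : ∀ p ∈ S_set, ‖(φ p).1 - p.1‖ ≤ Γ)
    (hfiber : ∀ q ∈ T_set, (S_set.filter fun p => φ p = q).card ≤ s) :
    (S_set.card : ℝ) * marginLoss h (γ - 2 * C_L * Γ) S_set ≤
      (s : ℝ) * (T_set.card : ℝ) * marginLoss h γ T_set := by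
  set A := S_set.filter fun p => ∃ c : Fin C, c ≠ p.2 ∧ h p.1 p.2 ≤ γ - 2 * C_L * Γ + h p.1 c
    with hA
  set B := T_set.filter fun p => ∃ c : Fin C, c ≠ p.2 ∧ h p.1 p.2 ≤ γ + h p.1 c with hB
  -- φ maps A into B
  have hmap : ∀ p ∈ A, φ p ∈ B := by
    intro p hp
    rw [hA, Finset.mem_filter] at hp
    obtain ⟨hpS, c, hc, hle⟩ := hp
    rw [hB, Finset.mem_filter]
    refine ⟨hφmem p hpS, c, by rw [hφlabel p hpS]; exact hc, ?_⟩
    have hd := hφdist p hpS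
    have h1 : |h (φ p).1 p.2 - h p.1 p.2| ≤ C_L * Γ := by
      refine (hlip _ _ _).trans ?_
      exact mul_le_mul_of_nonneg_left hd hCL
    have h2 : |h (φ p).1 c - h p.1 c| ≤ C_L * Γ := by
      refine (hlip _ _ _).trans ?_
      exact mul_le_mul_of_nonneg_left hd hCL
    rw [abs_le] at h1 h2
    rw [hφlabel p hpS]
    nlinarith [h1.1, h1.2, h2.1, h2.2]
  -- card A ≤ s * card B
  have hcard : (A.card : ℝ) ≤ (s : ℝ) * B.card := by
    have := Finset.card_eq_sum_card_fiberwise hmap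
    rw [this]
    push_cast
    calc (∑ q ∈ B, (A.filter fun p => φ p = q).card : ℝ)
        ≤ ∑ q ∈ B, (s : ℝ) := by
          refine Finset.sum_le_sum fun q hq => ?_
          have hqT : q ∈ T_set := (Finset.mem_filter.mp hq).1
          have : (A.filter fun p => φ p = q) ⊆ S_set.filter fun p => φ p = q := by
            intro p hp
            rw [Finset.mem_filter] at hp ⊢
            exact ⟨(Finset.mem_filter.mp hp.1).1, hp.2⟩
          exact_mod_cast (Finset.card_le_card this).trans (hfiber q hqT)
      _ = (s : ℝ) * B.card := by rw [Finset.sum_const]; push_cast; ring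
  -- conclude
  unfold marginLoss
  rw [← hA, ← hB]
  have hScard : (0 : ℝ) < S_set.card := by exact_mod_cast Finset.card_pos.mpr hS
  have hTcard : (0 : ℝ) < T_set.card := by exact_mod_cast Finset.card_pos.mpr hT
  rw [div_eq_mul_inv, div_eq_mul_inv]
  rw [show (S_set.card : ℝ) * (A.card * (S_set.card : ℝ)⁻¹) = A.card by
    field_simp]
  rw [show (s : ℝ) * T_set.card * (B.card * (T_set.card : ℝ)⁻¹) = (s : ℝ) * B.card by
    field_simp]
  exact hcard
end
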